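/- arXiv:1408.5949 — 2 statements merged into one kernel-verified Lean document; each statement's English description precedes it below -/
import Mathlib

section
/- If D is a triangulated disk with a good ordering T₁,...,T_m such that the boundary lengths |∂I₁| < |∂I₂| < ... < |∂I_m| are strictly increasing, then the dual graph of the triangulation of D is a tree. -/
open Finset

namespace TriSphere

variable {V : Type} [Fintype V] [DecidableEq V]

/-- The set of vertices of a set of faces. -/
def verts (F : Finset (Finset V)) : Finset V := F.biUnion id

/-- The edges of a set of (triangular) faces: the 2-element subsets of faces. -/
def edgs (F : Finset (Finset V)) : Finset (Finset V) :=
  F.biUnion fun f => f.powersetCard 2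

/-- The faces of `F` containing a given edge. -/
def facesOn (F : Finset (Finset V)) (e : Finset V) : Finset (Finset V) :=
  F.filter fun f => e ⊆ f

/-- Boundary edges: edges contained in exactly one face. -/
def bdryEdges (F : Finset (Finset V)) : Finset (Finset V) :=
  (edgs F).filter fun e => (facesOn F e).card = 1

/-- Boundary vertices. -/
def bdryVerts (F : Finset (Finset V)) : Finset V := (bdryEdges F).biUnion id

/-- The length of the boundary: the number of boundary vertices. -/
def bdryLen (F : Finset (Finset V)) : ℕ := (bdryVerts F).card

/-- The dual graph of a set of faces: two faces are adjacent iff they share an edge. -/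
def dualGraph (F : Finset (Finset V)) : SimpleGraph {f // f ∈ F} where
  Adj f g := f ≠ g ∧ (f.1 ∩ g.1).card = 2
  symm := ⟨fun f g h => ⟨h.1.symm, by rw [Finset.inter_comm]; exact h.2⟩⟩
  loopless := ⟨fun f h => h.1 rfl⟩

instance (F : Finset (Finset V)) : DecidableRel (dualGraph F).Adj :=
  fun f g => inferInstanceAs (Decidable (f ≠ g ∧ (f.1 ∩ g.1).card = 2))

/-- A combinatorial disk: a nonempty, dually connected set of triangles, each edge on at
most two faces, with Euler characteristic 1. -/
def IsDisk (F : Finset (Finset V)) : Prop :=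
  F.Nonempty ∧ (∀ f ∈ F, f.card = 3) ∧ (dualGraph F).Connected ∧
    (∀ e ∈ edgs F, (facesOn F e).card ≤ 2) ∧
    ((verts F).card : ℤ) - (edgs F).card + F.card = 1

/-- A simplicial triangulation of the 2-sphere: a closed simplicial surface
(every edge on exactly two faces, vertex links connected, dual graph connected)
with Euler characteristic 2. -/
structure SphereTri (V : Type) [Fintype V] [DecidableEq V] where
  faces : Finset (Finset V)
  nonempty : faces.Nonempty
  card3 : ∀ f ∈ faces, f.card = 3
  edge2 : ∀ e ∈ edgs faces, (facesOn faces e).card = 2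
  dualConn : (dualGraph faces).Connected
  linkConn : ∀ v : V, ∀ f ∈ faces, ∀ g ∈ faces, v ∈ f → v ∈ g →
    Relation.ReflTransGen
      (fun a b : Finset V => a ∈ faces ∧ b ∈ faces ∧ v ∈ a ∧ v ∈ b ∧ (a ∩ b).card = 2) f g
  euler : ((verts faces).card : ℤ) - (edgs faces).card + faces.card = 2
  allVerts : verts faces = Finset.univ

/-- The 1-skeleton of a triangulation of the sphere. -/
def skel (T : SphereTri V) : SimpleGraph V where
  Adj u v := u ≠ v ∧ ({u, v} : Finset V) ∈ edgs T.faces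
  symm := ⟨fun u v h => ⟨h.1.symm, by rw [Finset.pair_comm]; exact h.2⟩⟩
  loopless := ⟨fun u h => h.1 rfl⟩

/-- The three edges of a triangle. -/
def faceEdges (f : Finset V) : Finset (Finset V) := f.powersetCard 2

/-- An unordered pair, as a 2-element finset. -/
def symEdge (e : Sym2 V) : Finset V :=
  Sym2.lift ⟨fun a b => ({a, b} : Finset V), fun a b => Finset.pair_comm a b⟩ e

/-- The set of edges of a closed walk (e.g. of an embedded cycle). -/
def cycleEdges (T : SphereTri V) {v : V} (c : (skel T).Walk v v) : Finset (Finset V) :=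
  c.edges.toFinset.image symEdge

/-- The face `f` provides a shortening move for the cycle `c`: `f` meets `c` in exactly
two (necessarily adjacent) edges.  (A face meeting `c` in one edge gives a lengthening.) -/
def Shortens (T : SphereTri V) {v : V} (c : (skel T).Walk v v) (f : Finset V) : Prop :=
  f ∈ T.faces ∧ (faceEdges f ∩ cycleEdges T c).card = 2

/-- The cycle `c` is the boundary of a triangle of `T`. -/
def IsTriBdry (T : SphereTri V) {v : V} (c : (skel T).Walk v v) : Prop :=
  ∃ f ∈ T.faces, cycleEdges T c = faceEdges f

/-- A stable geodesic: an embedded cycle admitting no shortening move which is not the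
boundary of a triangle. -/
def StableGeodesic (T : SphereTri V) {v : V} (c : (skel T).Walk v v) : Prop :=
  c.IsCycle ∧ (∀ f, ¬ Shortens T c f) ∧ ¬ IsTriBdry T c

/-- Two faces are on the same side of the cycle `c` if they are joined by a dual path
which never crosses an edge of `c`. -/
def SameSide (T : SphereTri V) {v : V} (c : (skel T).Walk v v) (f g : Finset V) : Prop :=
  Relation.ReflTransGen
    (fun a b : Finset V => a ∈ T.faces ∧ b ∈ T.faces ∧ (a ∩ b).card = 2 ∧
      (a ∩ b) ∉ cycleEdges T c) f g

/-- Two faces on opposite sides of the cycle `c`. -/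
def OppSides (T : SphereTri V) {v : V} (c : (skel T).Walk v v) (f g : Finset V) : Prop :=
  f ∈ T.faces ∧ g ∈ T.faces ∧ ¬ SameSide T c f g

/-- An unstable geodesic: a cycle with shortening moves on both sides, such that every
pair of shortening moves on opposite sides uses triangles meeting in an edge of the cycle
(so the two moves cannot be performed simultaneously). -/
def UnstableGeodesic (T : SphereTri V) {v : V} (c : (skel T).Walk v v) : Prop :=
  c.IsCycle ∧
  (∃ f g, Shortens T c f ∧ Shortens T c g ∧ OppSides T c f g) ∧
  (∀ f g, Shortens T c f → Shortens T c g → OppSides T c f g →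
    ∃ e ∈ cycleEdges T c, e ⊆ f ∧ e ⊆ g)

/-- `seq L k = |∂ I_k|`, the boundary length of the union of the first `k` triangles. -/
def seq (L : List (Finset V)) (k : ℕ) : ℕ := bdryLen (L.take k).toFinset

/-- A good ordering of the faces `F`: every proper partial union is a disk. -/
def Good (F : Finset (Finset V)) (L : List (Finset V)) : Prop :=
  L.Nodup ∧ L.toFinset = F ∧
    ∀ k, 1 ≤ k → k < L.length → IsDisk (L.take k).toFinset

/-- `|∂ I_j|` is a local maximum of the ordering (with `|∂ I_0| = |∂ I_n| = 0`). -/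
def LocalMaxAt (L : List (Finset V)) (j : ℕ) : Prop :=
  1 ≤ j ∧ j < L.length ∧ seq L (j - 1) < seq L j ∧ seq L (j + 1) < seq L j

/-- `|∂ I_j|` is a local minimum of the ordering. -/
def LocalMinAt (L : List (Finset V)) (j : ℕ) : Prop :=
  1 ≤ j ∧ j < L.length ∧ seq L j < seq L (j - 1) ∧ seq L j < seq L (j + 1)

instance (L : List (Finset V)) : DecidablePred (LocalMaxAt L) := fun _ =>
  inferInstanceAs (Decidable (_ ∧ _ ∧ _ ∧ _))
instance (L : List (Finset V)) : DecidablePred (LocalMinAt L) := fun _ =>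
  inferInstanceAs (Decidable (_ ∧ _ ∧ _ ∧ _))

/-- The indices of the local maxima of an ordering. -/
def maxIndices (L : List (Finset V)) : List ℕ :=
  (List.range L.length).filter fun j => decide (LocalMaxAt L j)

/-- The indices of the local minima of an ordering. -/
def minIndices (L : List (Finset V)) : List ℕ :=
  (List.range L.length).filter fun j => decide (LocalMinAt L j)

/-- The width of an ordering: the list of values of its local maxima, sorted
in decreasing order (so widths are compared lexicographically). -/
def widthList (L : List (Finset V)) : List ℕ :=
  List.insertionSort (· ≥ ·) ((maxIndices L).map (seq L))

/-- A thin ordering: a good ordering minimizing the width lexicographically. -/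
def Thin (F : Finset (Finset V)) (L : List (Finset V)) : Prop :=
  Good F L ∧ ∀ L', Good F L' → ¬ List.Lex (· < ·) (widthList L') (widthList L)

/-- Bridge position: a good ordering with a single local maximum and no local minima. -/
def Bridge (F : Finset (Finset V)) (L : List (Finset V)) : Prop :=
  Good F L ∧ (∃! j, LocalMaxAt L j) ∧ ∀ j, ¬ LocalMinAt L j

/-- A wheel: a triangulated disk whose dual graph is a cycle (connected, all degrees 2). -/
def IsWheel (F : Finset (Finset V)) : Prop :=
  3 ≤ F.card ∧ (dualGraph F).Connected ∧ ∀ f, (dualGraph F).degree f = 2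

end TriSphere

/-!
Starting from `|∂I₁| = 3`, a strictly increasing boundary length gives `|∂D| ≥ m + 2`, so the
disk has at least `m + 2` vertices. Counting face–edge incidences gives `E + I = 3m`, where `I`
is the number of interior edges, and with Euler's formula `V - E + m = 1` this becomes
`I + V = 2m + 1`. The edges of the dual graph are exactly the interior edges, so the connected
dual graph on `m` vertices has at most `m - 1` edges and is therefore a tree.
-/

open SimpleGraph in
theorem SimpleGraph.Connected.isTree_of_card_edgeFinset_add_one_le {W : Type*} [Fintype W]
    {G : SimpleGraph W} [Fintype G.edgeSet] (hG : G.Connected)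
    (hcard : #G.edgeFinset + 1 ≤ Fintype.card W) : G.IsTree := by
  have hlower := hG.card_vert_le_card_edgeSet_add_one
  rw [Nat.card_eq_fintype_card, Nat.card_eq_fintype_card, ← edgeFinset_card] at hlower
  rw [isTree_iff_connected_and_card, Nat.card_eq_fintype_card, Nat.card_eq_fintype_card,
    ← edgeFinset_card]
  exact ⟨hG, le_antisymm hcard hlower⟩

theorem Finset.card_inter_lt_left_of_ne {α : Type*} [DecidableEq α] {s t : Finset α}
    (hst : s ≠ t) (hcard : #s = #t) : #(s ∩ t) < #s := by
  refine card_lt_card (ssubset_iff_subset_ne.2 ⟨inter_subset_left, fun hinter => hst ?_⟩)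
  exact eq_of_subset_of_card_le (inter_eq_left.1 hinter) hcard.ge

theorem Nat.apply_one_add_le_of_lt_succ {a : ℕ → ℕ} {n : ℕ} (hn : 1 ≤ n)
    (h : ∀ k, 1 ≤ k → k < n → a k < a (k + 1)) : a 1 + (n - 1) ≤ a n := by
  induction n, hn using Nat.le_induction with
  | base => simp
  | succ n hn ih =>
    have := ih fun k hk hkn => h k hk (by omega)
    have := h n hn (by omega)
    omega

namespace TriSphere

variable {V : Type} [DecidableEq V] {F : Finset (Finset V)} {e f g : Finset V}

def interiorEdges (F : Finset (Finset V)) : Finset (Finset V) :=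
  (edgs F).filter fun e => #(facesOn F e) = 2

@[simp]
theorem mem_edgs : e ∈ edgs F ↔ ∃ f ∈ F, e ⊆ f ∧ #e = 2 := by
  simp [edgs]

@[simp]
theorem mem_facesOn : f ∈ facesOn F e ↔ f ∈ F ∧ e ⊆ f := mem_filter

theorem sum_card_facesOn : ∑ e ∈ edgs F, #(facesOn F e) = ∑ f ∈ F, (#f).choose 2 := by
  have hbelow : ∀ f ∈ F, (edgs F).bipartiteBelow (· ⊆ ·) f = f.powersetCard 2 := by
    intro f hf
    ext e
    simp only [bipartiteBelow, mem_filter, mem_edgs, mem_powersetCard]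
    exact ⟨fun ⟨⟨_, _, _, he⟩, hef⟩ => ⟨hef, he⟩, fun ⟨hef, he⟩ => ⟨⟨f, hf, hef, he⟩, hef⟩⟩
  rw [← sum_congr rfl fun f hf => (hbelow f hf ▸ card_powersetCard 2 f :)]
  exact sum_card_bipartiteAbove_eq_sum_card_bipartiteBelow _

theorem card_edgs_add_card_interiorEdges (h3 : ∀ f ∈ F, #f = 3)
    (h2 : ∀ e ∈ edgs F, #(facesOn F e) ≤ 2) :
    #(edgs F) + #(interiorEdges F) = 3 * #F := by
  have hpos : ∀ e ∈ edgs F, 0 < #(facesOn F e) := by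
    intro e he
    obtain ⟨f, hf, hef, -⟩ := mem_edgs.1 he
    exact card_pos.2 ⟨f, mem_facesOn.2 ⟨hf, hef⟩⟩
  have hsum : ∑ e ∈ edgs F, #(facesOn F e) = 3 * #F := by
    rw [sum_card_facesOn, sum_const_nat (m := 3) fun f hf => by rw [h3 f hf]; rfl, mul_comm]
  rw [interiorEdges, card_filter, card_eq_sum_ones (edgs F), ← sum_add_distrib, ← hsum]
  refine sum_congr rfl fun e he => ?_
  have := h2 e he
  have := hpos e he
  split_ifs <;> omega

theorem card_interiorEdges_add_card_verts (h3 : ∀ f ∈ F, #f = 3)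
    (h2 : ∀ e ∈ edgs F, #(facesOn F e) ≤ 2)
    (heuler : ((verts F).card : ℤ) - (edgs F).card + F.card = 1) :
    #(interiorEdges F) + #(verts F) = 2 * #F + 1 := by
  have := card_edgs_add_card_interiorEdges h3 h2
  omega

theorem facesOn_inter_eq_pair (h2 : ∀ e ∈ edgs F, #(facesOn F e) ≤ 2) (hf : f ∈ F) (hg : g ∈ F)
    (hfg : f ≠ g) (hcard : #(f ∩ g) = 2) : facesOn F (f ∩ g) = {f, g} := by
  have hsub : {f, g} ⊆ facesOn F (f ∩ g) :=
    insert_subset_iff.2 ⟨mem_facesOn.2 ⟨hf, inter_subset_left⟩,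
      singleton_subset_iff.2 (mem_facesOn.2 ⟨hg, inter_subset_right⟩)⟩
  refine (eq_of_subset_of_card_le hsub ?_).symm
  rw [card_pair hfg]
  exact h2 _ (mem_edgs.2 ⟨f, hf, inter_subset_left, hcard⟩)

def dualEdge (z : Sym2 {f // f ∈ F}) : Finset V :=
  Sym2.lift ⟨fun f g => f.1 ∩ g.1, fun f g => inter_comm f.1 g.1⟩ z

theorem mem_iff_mem_facesOn_dualEdge (h2 : ∀ e ∈ edgs F, #(facesOn F e) ≤ 2)
    {z : Sym2 {f // f ∈ F}} (hz : z ∈ (dualGraph F).edgeSet) (x : {f // f ∈ F}) :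
    x ∈ z ↔ x.1 ∈ facesOn F (dualEdge z) := by
  induction z with
  | _ f g =>
    obtain ⟨hfg, hcard⟩ := hz
    rw [dualEdge, Sym2.lift_mk, facesOn_inter_eq_pair h2 f.2 g.2 (Subtype.coe_ne_coe.2 hfg) hcard,
      Sym2.mem_iff, mem_insert, mem_singleton, Subtype.ext_iff, Subtype.ext_iff]

theorem card_edgeFinset_dualGraph (h3 : ∀ f ∈ F, #f = 3)
    (h2 : ∀ e ∈ edgs F, #(facesOn F e) ≤ 2) :
    #(dualGraph F).edgeFinset = #(interiorEdges F) := by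
  refine card_nbij dualEdge (fun z hz => ?_) (fun z hz z' hz' heq => ?_) (fun e he => ?_)
  · rw [mem_coe, SimpleGraph.mem_edgeFinset] at hz
    induction z with
    | _ f g =>
      obtain ⟨hfg, hcard⟩ := hz
      have hfg' : f.1 ≠ g.1 := Subtype.coe_ne_coe.2 hfg
      refine mem_filter.2 ⟨mem_edgs.2 ⟨f, f.2, inter_subset_left, hcard⟩, ?_⟩
      rw [dualEdge, Sym2.lift_mk, facesOn_inter_eq_pair h2 f.2 g.2 hfg' hcard, card_pair hfg']
  · rw [mem_coe, SimpleGraph.mem_edgeFinset] at hz hz'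
    exact Sym2.ext fun x => by
      rw [mem_iff_mem_facesOn_dualEdge h2 hz, mem_iff_mem_facesOn_dualEdge h2 hz', heq]
  · obtain ⟨he, hfaces⟩ := mem_filter.1 he
    obtain ⟨-, -, -, he2⟩ := mem_edgs.1 he
    obtain ⟨f, g, hfg, hfg_eq⟩ := card_eq_two.1 hfaces
    have hf : f ∈ F ∧ e ⊆ f := mem_facesOn.1 (hfg_eq ▸ mem_insert_self f {g})
    have hg : g ∈ F ∧ e ⊆ g := mem_facesOn.1 (hfg_eq ▸ mem_insert_of_mem (mem_singleton_self g))
    have hinter : f ∩ g = e := by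
      have hlt := card_inter_lt_left_of_ne hfg ((h3 f hf.1).trans (h3 g hg.1).symm)
      rw [h3 f hf.1] at hlt
      exact (eq_of_subset_of_card_le (subset_inter hf.2 hg.2) (by omega)).symm
    refine ⟨s(⟨f, hf.1⟩, ⟨g, hg.1⟩), ?_, hinter⟩
    rw [mem_coe, SimpleGraph.mem_edgeFinset]
    exact ⟨fun h => hfg (congrArg Subtype.val h), hinter ▸ he2⟩

theorem bdryLen_le_card_verts (F : Finset (Finset V)) : bdryLen F ≤ #(verts F) := by
  refine card_le_card fun x hx => ?_
  simp only [bdryVerts, bdryEdges, mem_biUnion, mem_filter, mem_edgs, id] at hx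
  obtain ⟨e, ⟨⟨f, hf, hef, -⟩, -⟩, hxe⟩ := hx
  exact mem_biUnion.2 ⟨f, hf, hef hxe⟩

theorem bdryLen_singleton (hf : 2 ≤ #f) : bdryLen {f} = #f := by
  have hbdry : bdryEdges {f} = f.powersetCard 2 := by
    ext e
    simp +contextual [bdryEdges, facesOn, edgs, filter_singleton]
  rw [bdryLen, bdryVerts, hbdry, powersetCard_biUnion two_ne_zero hf]

theorem seq_one_of_cons (f : Finset V) (L : List (Finset V)) : seq (f :: L) 1 = bdryLen {f} := by
  simp [seq]

theorem length_add_two_le_bdryLen {L : List (Finset V)} (hne : L ≠ []) (h3 : ∀ f ∈ L, #f = 3)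
    (hmono : ∀ k, 1 ≤ k → k < L.length → seq L k < seq L (k + 1)) :
    L.length + 2 ≤ bdryLen L.toFinset := by
  obtain ⟨f, L', rfl⟩ := List.exists_cons_of_ne_nil hne
  have hf : #f = 3 := h3 f List.mem_cons_self
  have hgrowth := Nat.apply_one_add_le_of_lt_succ (by simp) hmono
  rw [seq_one_of_cons, bdryLen_singleton (by omega), hf, seq, List.take_length] at hgrowth
  simp only [List.length_cons] at hgrowth ⊢
  omega

end TriSphere

open TriSphere in
theorem strictly_increasing_good_ordering_dual_tree_general {V : Type} [DecidableEq V]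
    (F : Finset (Finset V)) (L : List (Finset V)) (hF : IsDisk F) (hL : Good F L)
    (hmono : ∀ k, 1 ≤ k → k < L.length → seq L k < seq L (k + 1)) :
    (dualGraph F).IsTree := by
  obtain ⟨hnodup, rfl, -⟩ := hL
  obtain ⟨hne, h3, hconn, h2, heuler⟩ := hF
  have hbdry := length_add_two_le_bdryLen ((List.toFinset_nonempty_iff L).1 hne)
    (fun f hf => h3 f (List.mem_toFinset.2 hf)) hmono
  have hverts := bdryLen_le_card_verts L.toFinset
  have hcount := card_interiorEdges_add_card_verts h3 h2 heuler
  have hm := List.toFinset_card_of_nodup hnodup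
  refine hconn.isTree_of_card_edgeFinset_add_one_le ?_
  rw [card_edgeFinset_dualGraph h3 h2, Fintype.card_coe]
  omega

open TriSphere in
/-- If a triangulated disk has a good ordering whose boundary lengths are
strictly increasing, then its dual graph is a tree. -/
theorem strictly_increasing_good_ordering_dual_tree {V : Type} [Fintype V] [DecidableEq V]
    (F : Finset (Finset V)) (L : List (Finset V)) (hF : IsDisk F) (hL : Good F L)
    (hmono : ∀ k, 1 ≤ k → k < L.length → seq L k < seq L (k + 1)) :
    (dualGraph F).IsTree :=
  strictly_increasing_good_ordering_dual_tree_general F L hF hL hmono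
end

section
/- In the tetrahedral triangulation of the 2-sphere, there are exactly three embedded cycles of length four in the 1-skeleton, and each is an unstable geodesic. -/
open Finset

/-!
The 1-skeleton of the tetrahedron is `K₄`, so a 4-cycle `v a b d` visits every vertex and
consists of all edges except the two diagonals `{v, b}` and `{a, d} = {v, b}ᶜ`. It is therefore
determined by its diagonal through any fixed vertex, which leaves three choices.

The triangles `{v, a, b}` and `{a, b, d}` each contain two cycle edges, and they lie on opposite
sides: the only edge off the cycle of a face through `{v, b}` is `{v, b}` itself, so a dual path
from `{v, a, b}` that does not cross the cycle never reaches a face avoiding `v`. Conversely, any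
two faces of the tetrahedron share an edge, and if it is off the cycle they lie on the same side,
so shortening moves on opposite sides always share a cycle edge.
-/

lemma Finset.pair_eq_pair_iff {V : Type} [DecidableEq V] {x y z w : V} :
    ({x, y} : Finset V) = {z, w} ↔ x = z ∧ y = w ∨ x = w ∧ y = z := by
  rw [← coe_inj, coe_pair, coe_pair, Set.pair_eq_pair_iff]

lemma SimpleGraph.Walk.isCycle_cons_four {V : Type} {G : SimpleGraph V} {v a b d : V}
    (h1 : G.Adj v a) (h2 : G.Adj a b) (h3 : G.Adj b d) (h4 : G.Adj d v)
    (h : [v, a, b, d].Nodup) : (cons h1 (cons h2 (cons h3 (cons h4 nil)))).IsCycle := by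
  refine isCycle_iff_isPath_tail_and_le_length.2 ⟨?_, by simp⟩
  rw [isPath_def]
  simpa using (List.nodup_rotate (n := 1)).2 h

namespace TriSphere

section Sides

variable {V : Type} [Fintype V] [DecidableEq V] (T : SphereTri V) {u : V}
  (c : (skel T).Walk u u)

lemma OppSides.inter_mem_cycleEdges {f g : Finset V} (h : OppSides T c f g)
    (hfg : (f ∩ g).card = 2) : f ∩ g ∈ cycleEdges T c := by
  by_contra hc
  exact h.2.2 (Relation.ReflTransGen.single ⟨h.1, h.2.1, hfg, hc⟩)

lemma OppSides.ne {f g : Finset V} (h : OppSides T c f g) : f ≠ g := by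
  rintro rfl
  exact h.2.2 Relation.ReflTransGen.refl

lemma SameSide.subset_of_trapped {e f g : Finset V}
    (htrap : ∀ x ∈ T.faces, e ⊆ x →
      ∀ e' ⊆ x, e'.card = 2 → e' ∉ cycleEdges T c → e' = e)
    (h : SameSide T c f g) (hf : e ⊆ f) : e ⊆ g := by
  induction h with
  | refl => exact hf
  | tail _ hstep ih =>
    obtain ⟨hx, -, hcard, hnotMem⟩ := hstep
    rw [← htrap _ hx ih _ inter_subset_left hcard hnotMem]
    exact inter_subset_right

lemma oppSides_of_trapped {e f g : Finset V}
    (htrap : ∀ x ∈ T.faces, e ⊆ x →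
      ∀ e' ⊆ x, e'.card = 2 → e' ∉ cycleEdges T c → e' = e)
    (hf : f ∈ T.faces) (hg : g ∈ T.faces) (hef : e ⊆ f) (heg : ¬ e ⊆ g) :
    OppSides T c f g :=
  ⟨hf, hg, fun h => heg (h.subset_of_trapped T c htrap hef)⟩

end Sides

section Quadrilaterals

variable {V : Type} [DecidableEq V]

def quadEdges (v a b d : V) : Finset (Finset V) := {{v, a}, {a, b}, {b, d}, {d, v}}

lemma quadEdges_rotate (v a b d : V) : quadEdges v a b d = quadEdges a b d v := by
  ext t
  simp only [quadEdges, mem_insert, mem_singleton]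
  tauto

lemma card_powersetCard_two_inter_quadEdges {v a b d : V} (h : [v, a, b, d].Nodup) :
    (({v, a, b} : Finset V).powersetCard 2 ∩ quadEdges v a b d).card = 2 := by
  simp only [List.nodup_cons, List.mem_cons, List.not_mem_nil, List.nodup_nil, or_false,
    not_or] at h
  obtain ⟨⟨hva, hvb, hvd⟩, ⟨hab, had⟩, hbd, -⟩ := h
  refine card_eq_two.2 ⟨{v, a}, {a, b}, fun h => ?_, ?_⟩
  · have : v ∈ ({a, b} : Finset V) := h ▸ mem_insert_self v {a}
    simp_all
  · ext t
    simp only [quadEdges, mem_inter, mem_powersetCard, mem_insert, mem_singleton]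
    constructor
    · rintro ⟨⟨hsub, -⟩, rfl | rfl | rfl | rfl⟩
      · simp
      · simp
      · have := hsub (mem_insert_of_mem (mem_singleton_self d))
        simp_all [eq_comm]
      · have := hsub (mem_insert_self d _)
        simp_all [eq_comm]
    · rintro (rfl | rfl) <;> refine ⟨⟨?_, card_pair ?_⟩, by simp⟩ <;> grind

variable [Fintype V]

/-- The edges of the complete graph on `V` other than `e` and `eᶜ`: when `V` has four elements
and `e` is an edge, the 4-cycle with diagonals `e` and `eᶜ`. -/
def quadOfDiagonal (e : Finset V) : Finset (Finset V) := univ.powersetCard 2 \ {e, eᶜ}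

lemma mem_quadOfDiagonal {e t : Finset V} :
    t ∈ quadOfDiagonal e ↔ t.card = 2 ∧ t ≠ e ∧ t ≠ eᶜ := by
  simp [quadOfDiagonal]

lemma eq_of_notMem_quadOfDiagonal {e e' f : Finset V} (hf : f ≠ univ) (he : e ⊆ f)
    (he' : e' ⊆ f) (hcard : e'.card = 2) (hnotMem : e' ∉ quadOfDiagonal e) : e' = e := by
  rw [mem_quadOfDiagonal] at hnotMem
  by_contra hne
  refine hf (eq_univ_of_forall fun x => ?_)
  by_cases hx : x ∈ e
  · exact he hx
  · have : e' = eᶜ := by tauto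
    exact he' (this ▸ mem_compl.2 hx)

lemma quadOfDiagonal_pair_injOn (x : V) :
    Set.InjOn (fun y => quadOfDiagonal {x, y}) ((univ.erase x : Finset V) : Set V) := by
  intro y _ y' hy' heq
  by_contra hne
  have hy'x : y' ≠ x := by simpa using hy'
  have hmem : ({x, y'} : Finset V) ∈ quadOfDiagonal {x, y} := by
    refine mem_quadOfDiagonal.2 ⟨card_pair hy'x.symm, fun h => ?_, fun h => ?_⟩
    · rw [pair_eq_pair_iff] at h
      tauto
    · have : x ∈ ({x, y}ᶜ : Finset V) := h ▸ mem_insert_self x {y'}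
      simp at this
  dsimp only at heq
  exact (mem_quadOfDiagonal.1 (heq ▸ hmem)).2.1 rfl

lemma univ_eq_of_nodup (hV : Fintype.card V = 4) {v a b d : V} (h : [v, a, b, d].Nodup) :
    (univ : Finset V) = {v, a, b, d} :=
  (eq_univ_of_card _ (by simpa [hV] using List.toFinset_card_of_nodup h)).symm

lemma card_inter_eq_two (hV : Fintype.card V = 4) {f g : Finset V} (hf : f.card = 3)
    (hg : g.card = 3) (hne : f ≠ g) : (f ∩ g).card = 2 := by
  have hunion := card_union_add_card_inter f g
  have hle : (f ∪ g).card ≤ 4 := hV ▸ card_le_univ _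
  have hlt : (f ∩ g).card < 3 := by
    refine lt_of_le_of_ne (hf ▸ card_le_card inter_subset_left) fun h3 => hne ?_
    have hf' := eq_of_subset_of_card_le inter_subset_left (hf.trans h3.symm).le
    have hg' := eq_of_subset_of_card_le inter_subset_right (hg.trans h3.symm).le
    exact hf'.symm.trans hg'
  omega

lemma quadEdges_eq_quadOfDiagonal (hV : Fintype.card V = 4) {v a b d : V}
    (h : [v, a, b, d].Nodup) : quadEdges v a b d = quadOfDiagonal {v, b} := by
  have hu := univ_eq_of_nodup hV h
  simp only [List.nodup_cons, List.mem_cons, List.not_mem_nil, List.nodup_nil, or_false,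
    not_or] at h
  obtain ⟨⟨hva, hvb, hvd⟩, ⟨hab, had⟩, hbd, -⟩ := h
  have hcompl : ({v, b} : Finset V)ᶜ = {a, d} := by
    rw [compl_eq_univ_sdiff, hu]
    ext
    simp only [mem_sdiff, mem_insert, mem_singleton]
    grind
  rw [quadOfDiagonal, hcompl, hu]
  ext t
  simp only [quadEdges, mem_sdiff, mem_powersetCard, mem_insert, mem_singleton]
  constructor
  · rintro (rfl | rfl | rfl | rfl) <;>
      simp [insert_subset_iff, pair_eq_pair_iff, *, Ne.symm]
  · rintro ⟨⟨hsub, hcard⟩, hne⟩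
    obtain ⟨p, q, hpq, rfl⟩ := card_eq_two.1 hcard
    have hp := hsub (mem_insert_self p {q})
    have hq := hsub (mem_insert_of_mem (mem_singleton_self q))
    simp only [mem_insert, mem_singleton] at hp hq
    simp only [pair_eq_pair_iff] at hne ⊢
    grind

lemma exists_quadEdges_eq_quadOfDiagonal (hV : Fintype.card V = 4) {v a b d : V}
    (h : [v, a, b, d].Nodup) (x : V) :
    ∃ y ∈ univ.erase x, quadEdges v a b d = quadOfDiagonal {x, y} := by
  have hfirst : ∀ {v a b d : V}, [v, a, b, d].Nodup →
      ∃ y ∈ univ.erase v, quadEdges v a b d = quadOfDiagonal {v, y} := fun h =>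
    ⟨_, mem_erase.2 ⟨fun hbv => by simp [hbv] at h, mem_univ _⟩,
      quadEdges_eq_quadOfDiagonal hV h⟩
  have hx : x ∈ ({v, a, b, d} : Finset V) := univ_eq_of_nodup hV h ▸ mem_univ x
  simp only [mem_insert, mem_singleton] at hx
  rcases hx with rfl | rfl | rfl | rfl
  · exact hfirst h
  · rw [quadEdges_rotate]
    exact hfirst (by simpa using (List.nodup_rotate (n := 1)).2 h)
  · rw [quadEdges_rotate, quadEdges_rotate]
    exact hfirst (by simpa using (List.nodup_rotate (n := 2)).2 h)
  · rw [quadEdges_rotate, quadEdges_rotate, quadEdges_rotate]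
    exact hfirst (by simpa using (List.nodup_rotate (n := 3)).2 h)

end Quadrilaterals

section Tetrahedron

variable {V : Type} [Fintype V] [DecidableEq V] (T : SphereTri V)

lemma cycleEdges_cons_four {v a b d : V} (h1 : (skel T).Adj v a) (h2 : (skel T).Adj a b)
    (h3 : (skel T).Adj b d) (h4 : (skel T).Adj d v) :
    cycleEdges T (.cons h1 (.cons h2 (.cons h3 (.cons h4 .nil)))) = quadEdges v a b d := by
  simp [cycleEdges, symEdge, quadEdges]

lemma exists_quadEdges_of_isCycle {v : V} (c : (skel T).Walk v v) (hc : c.IsCycle)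
    (hl : c.length = 4) : ∃ a b d, [v, a, b, d].Nodup ∧ cycleEdges T c = quadEdges v a b d := by
  match c, hl with
  | .cons (v := a) h1 (.cons (v := b) h2 (.cons (v := d) h3 (.cons h4 .nil))), _ =>
    refine ⟨a, b, d, ?_, cycleEdges_cons_four T h1 h2 h3 h4⟩
    simpa using (List.nodup_rotate (n := 3)).2 hc.support_nodup

lemma skel_adj_of_ne (hV : 2 < Fintype.card V) (hfaces : T.faces = univ.powersetCard 3)
    {x y : V} (hxy : x ≠ y) : (skel T).Adj x y := by
  refine ⟨hxy, ?_⟩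
  obtain ⟨z, hz⟩ : ({x, y} : Finset V)ᶜ.Nonempty := by
    rw [← card_pos, card_compl, card_pair hxy]
    omega
  rw [mem_compl] at hz
  refine mem_biUnion.2 ⟨insert z {x, y}, ?_, ?_⟩
  · rw [hfaces, mem_powersetCard, card_insert_of_notMem hz, card_pair hxy]
    exact ⟨subset_univ _, rfl⟩
  · exact mem_powersetCard.2 ⟨subset_insert _ _, card_pair hxy⟩

lemma exists_isCycle_cycleEdges_eq_quadOfDiagonal (hV : Fintype.card V = 4)
    (hfaces : T.faces = univ.powersetCard 3) {x y : V} (hxy : x ≠ y) :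
    ∃ c : (skel T).Walk x x, c.IsCycle ∧ c.length = 4 ∧
      cycleEdges T c = quadOfDiagonal {x, y} := by
  obtain ⟨a, d, had, hcompl⟩ : ∃ a d, a ≠ d ∧ ({x, y} : Finset V)ᶜ = {a, d} := by
    rw [← card_eq_two, card_compl, card_pair hxy, hV]
  have ha : a ∉ ({x, y} : Finset V) := mem_compl.1 (hcompl ▸ mem_insert_self a {d})
  have hd : d ∉ ({x, y} : Finset V) := mem_compl.1 (hcompl ▸ by simp)
  simp only [mem_insert, mem_singleton, not_or] at ha hd
  have h : [x, a, y, d].Nodup := by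
    simp [*, Ne.symm ha.1, Ne.symm hd.1, Ne.symm hd.2]
  have hadj : ∀ {p q : V}, p ≠ q → (skel T).Adj p q := skel_adj_of_ne T (by omega) hfaces
  refine ⟨.cons (hadj (Ne.symm ha.1)) (.cons (hadj ha.2) (.cons (hadj (Ne.symm hd.2))
    (.cons (hadj hd.1) .nil))), SimpleGraph.Walk.isCycle_cons_four _ _ _ _ h, rfl, ?_⟩
  rw [cycleEdges_cons_four, quadEdges_eq_quadOfDiagonal hV h]

theorem setOf_cycleEdges_eq_image (hV : Fintype.card V = 4)
    (hfaces : T.faces = univ.powersetCard 3) (x : V) :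
    {S | ∃ (v : V) (c : (skel T).Walk v v), c.IsCycle ∧ c.length = 4 ∧ cycleEdges T c = S} =
      ((univ.erase x).image fun y => quadOfDiagonal {x, y} : Finset (Finset (Finset V))) := by
  ext S
  simp only [Set.mem_ofPred_eq, coe_image, Set.mem_image, mem_coe]
  constructor
  · rintro ⟨v, c, hc, hl, rfl⟩
    obtain ⟨a, b, d, h, hS⟩ := exists_quadEdges_of_isCycle T c hc hl
    obtain ⟨y, hy, hy'⟩ := exists_quadEdges_eq_quadOfDiagonal hV h x
    exact ⟨y, hy, by rw [hS, hy']⟩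
  · rintro ⟨y, hy, rfl⟩
    exact ⟨x, exists_isCycle_cycleEdges_eq_quadOfDiagonal T hV hfaces (mem_erase.1 hy).1.symm⟩

lemma shortens_of_cycleEdges_eq_quadEdges (hfaces : T.faces = univ.powersetCard 3) {u : V}
    {c : (skel T).Walk u u} {v a b d : V} (h : [v, a, b, d].Nodup)
    (hS : cycleEdges T c = quadEdges v a b d) : Shortens T c {v, a, b} := by
  refine ⟨?_, by rw [faceEdges, hS]; exact card_powersetCard_two_inter_quadEdges h⟩
  simp only [List.nodup_cons, List.mem_cons, List.not_mem_nil, List.nodup_nil, or_false,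
    not_or] at h
  rw [hfaces, mem_powersetCard]
  exact ⟨subset_univ _, card_eq_three.2 ⟨v, a, b, h.1.1, h.1.2.1, h.2.1.1, rfl⟩⟩

theorem unstableGeodesic_of_cycleEdges_eq_quadEdges (hV : Fintype.card V = 4)
    (hfaces : T.faces = univ.powersetCard 3) {u : V} {c : (skel T).Walk u u} (hc : c.IsCycle)
    {v a b d : V} (h : [v, a, b, d].Nodup) (hS : cycleEdges T c = quadEdges v a b d) :
    UnstableGeodesic T c := by
  have hf := shortens_of_cycleEdges_eq_quadEdges T hfaces h hS
  have hg := shortens_of_cycleEdges_eq_quadEdges T hfaces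
    (by simpa using (List.nodup_rotate (n := 1)).2 h) (hS.trans (quadEdges_rotate v a b d))
  refine ⟨hc, ⟨_, _, hf, hg, ?_⟩, fun f g _ _ hfg => ⟨f ∩ g, hfg.inter_mem_cycleEdges T c
    (card_inter_eq_two hV (T.card3 f hfg.1) (T.card3 g hfg.2.1) (hfg.ne T c)),
    inter_subset_left, inter_subset_right⟩⟩
  refine oppSides_of_trapped T c (e := {v, b}) (fun x hx hvb e' he' hcard hnotMem => ?_)
    hf.1 hg.1 (by simp [insert_subset_iff]) (by simp_all [insert_subset_iff])
  rw [hS, quadEdges_eq_quadOfDiagonal hV h] at hnotMem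
  refine eq_of_notMem_quadOfDiagonal (fun hx' => ?_) hvb he' hcard hnotMem
  have := T.card3 x hx
  rw [hx', card_univ, hV] at this
  omega

end Tetrahedron

end TriSphere

open TriSphere in
/-- In the tetrahedral triangulation of the 2-sphere (4 vertices, all four
triples being faces), there are exactly three embedded cycles of length four in the
1-skeleton (counted by their edge sets), and each is an unstable geodesic. -/
theorem tetrahedron_three_unstable_four_cycles {V : Type} [Fintype V] [DecidableEq V]
    (T : SphereTri V) (hV : Fintype.card V = 4)
    (hfaces : T.faces = Finset.univ.powersetCard 3) :
    Set.ncard {S : Finset (Finset V) | ∃ (v : V) (c : (skel T).Walk v v),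
        c.IsCycle ∧ c.length = 4 ∧ cycleEdges T c = S} = 3 ∧
      ∀ (v : V) (c : (skel T).Walk v v), c.IsCycle → c.length = 4 →
        UnstableGeodesic T c := by
  obtain ⟨x⟩ : Nonempty V := Fintype.card_pos_iff.1 (by omega)
  refine ⟨?_, fun v c hc hl => ?_⟩
  · rw [setOf_cycleEdges_eq_image T hV hfaces x, Set.ncard_coe_finset,
      card_image_of_injOn (quadOfDiagonal_pair_injOn x), card_erase_of_mem (mem_univ x),
      card_univ, hV]
  · obtain ⟨a, b, d, h, hS⟩ := exists_quadEdges_of_isCycle T c hc hl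
    exact unstableGeodesic_of_cycleEdges_eq_quadEdges T hV hfaces hc h hS
end
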